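/- arXiv:1211.2172 — 4 statements merged into one kernel-verified Lean document; each statement's English description precedes it below -/
import Mathlib

section
/- The index of SL_A in G_A is finite and equal to the additive order of the element j_{Aᵀ} in (ℚ/ℤ)^n; equivalently, the quotient group G_A/SL_A is cyclic of order equal to the order of j_{Aᵀ} (in the paper's notation, G_W/SL_W ≅ J_{W^T}). -/
open scoped BigOperators
open Matrix

noncomputable section

abbrev QZ : Type := AddCircle (1 : ℚ)

def qz : ℚ →+ QZ := QuotientAddGroup.mk' _

/-- The group `G_A` of all `g ∈ (ℚ/ℤ)^n` with `∑ j, A i j • g j = 0` for all `i`. -/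
def GA {n : ℕ} (A : Matrix (Fin n) (Fin n) ℤ) : AddSubgroup (Fin n → QZ) where
  carrier := {g | ∀ i, ∑ j, A i j • g j = 0}
  zero_mem' := by intro i; simp
  add_mem' := by
    intro a b ha hb i
    simp only [Pi.add_apply, smul_add, Finset.sum_add_distrib, ha i, hb i, add_zero]
  neg_mem' := by
    intro a ha i
    simp only [Pi.neg_apply, smul_neg, Finset.sum_neg_distrib, ha i, neg_zero]

/-- The subgroup `SL_A = {g ∈ G_A : ∑ i, g i = 0}`. -/
def SLA {n : ℕ} (A : Matrix (Fin n) (Fin n) ℤ) : AddSubgroup (Fin n → QZ) where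
  carrier := {g | g ∈ GA A ∧ ∑ i, g i = 0}
  zero_mem' := ⟨(GA A).zero_mem, by simp⟩
  add_mem' := by
    intro a b ha hb
    exact ⟨(GA A).add_mem ha.1 hb.1, by simp [Pi.add_apply, Finset.sum_add_distrib, ha.2, hb.2]⟩
  neg_mem' := by
    intro a ha
    exact ⟨(GA A).neg_mem ha.1, by simp [Pi.neg_apply, Finset.sum_neg_distrib, ha.2]⟩

/-- The exponential grading element `j_A`, the image in `(ℚ/ℤ)^n` of `A⁻¹·(1,…,1)ᵀ`. -/
def jA {n : ℕ} (A : Matrix (Fin n) (Fin n) ℤ) : Fin n → QZ :=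
  fun i => qz (((A.map (Int.cast : ℤ → ℚ))⁻¹).mulVec 1 i)

/-! Over `ℚ` put `B = A⁻¹`. An element of `(ℚ/ℤ)ⁿ` lifted to `q ∈ ℚⁿ` lies in `G_A` iff `A q ∈ ℤⁿ`,
so `G_A` is the image of `ℤⁿ` under `v ↦ B v mod ℤ`. The coordinate sum of `B v` is `∑ⱼ vⱼ cⱼ`
with `c = Bᵀ 1`, and `c mod ℤ = j_{Aᵀ}`; hence the sum map identifies `G_A / SL_A` with the
subgroup of `ℚ/ℤ` generated by the coordinates of `j_{Aᵀ}`. That subgroup is finite, hence cyclic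
(in `ℚ/ℤ` at most `k` elements are killed by `k`), and a cyclic group generated by the coordinates
of a vector has the order of that vector. -/

namespace AddSubgroup

variable {G ι : Type*} [AddCommGroup G] {t : ι → G}

lemma addOrderOf_nsmul_eq_zero_of_mem_closure_range {x : G} (hx : x ∈ closure (Set.range t)) :
    addOrderOf t • x = 0 := by
  refine (closure_le (nsmulAddMonoidHom (α := G) (addOrderOf t)).ker).2 ?_ hx
  rintro _ ⟨i, rfl⟩
  exact congrFun (addOrderOf_nsmul_eq_zero t) i

lemma card_closure_range_eq_addOrderOf [IsAddCyclic (closure (Set.range t))] :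
    Nat.card (closure (Set.range t)) = addOrderOf t := by
  obtain ⟨g, hg⟩ := IsAddCyclic.exists_generator (α := closure (Set.range t))
  rw [← addOrderOf_eq_card_of_forall_mem_zmultiples hg]
  refine Nat.dvd_antisymm ?_ ?_
  · rw [← addOrderOf_coe]
    exact addOrderOf_dvd_of_nsmul_eq_zero (addOrderOf_nsmul_eq_zero_of_mem_closure_range g.2)
  · rw [addOrderOf_eq_card_of_forall_mem_zmultiples hg]
    refine addOrderOf_dvd_of_nsmul_eq_zero (funext fun i => ?_)
    exact congrArg Subtype.val
      (card_nsmul_eq_zero' (x := (⟨t i, subset_closure ⟨i, rfl⟩⟩ : closure (Set.range t))))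

end AddSubgroup

namespace AddCircle

variable {𝕜 : Type*} [Field 𝕜] [LinearOrder 𝕜] [IsStrictOrderedRing 𝕜] {p : 𝕜} [Fact (0 < p)]

lemma setOf_nsmul_eq_zero_subset {n : ℕ} (hn : 0 < n) :
    {u : AddCircle p | n • u = 0} ⊆ (fun m : ℕ => ((m / n * p : 𝕜) : AddCircle p)) '' Set.Iio n :=
  fun _ hu => (AddCircle.nsmul_eq_zero_iff hn).1 hu

lemma finite_setOf_nsmul_eq_zero {n : ℕ} (hn : 0 < n) : {u : AddCircle p | n • u = 0}.Finite :=
  ((Set.finite_Iio n).image _).subset (setOf_nsmul_eq_zero_subset hn)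

lemma isAddCyclic_of_finite (H : AddSubgroup (AddCircle p)) [Finite H] : IsAddCyclic H := by
  classical
  have := Fintype.ofFinite H
  refine isAddCyclic_of_card_nsmul_eq_zero_le fun k hk => ?_
  calc Finset.card {a : H | k • a = 0}
      ≤ Finset.card ((Finset.range k).image fun m : ℕ => ((m / k * p : 𝕜) : AddCircle p)) := by
        refine Finset.card_le_card_of_injOn Subtype.val (fun a ha => ?_) Subtype.val_injective.injOn
        have hka : k • (a : AddCircle p) = 0 := congrArg Subtype.val (Finset.mem_filter.1 ha).2
        obtain ⟨m, hm, hma⟩ := setOf_nsmul_eq_zero_subset hk hka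
        exact Finset.mem_image.2 ⟨m, Finset.mem_range.2 hm, hma⟩
    _ ≤ k := Finset.card_image_le.trans (Finset.card_range k).le

lemma finite_closure_range {ι : Type*} {t : ι → AddCircle p} (ht : IsOfFinAddOrder t) :
    Finite (AddSubgroup.closure (Set.range t)) :=
  ((finite_setOf_nsmul_eq_zero ht.addOrderOf_pos).subset fun _ hx =>
    AddSubgroup.addOrderOf_nsmul_eq_zero_of_mem_closure_range hx).to_subtype

lemma isOfFinAddOrder_of_rat {p : ℚ} [Fact (0 < p)] (u : AddCircle p) : IsOfFinAddOrder u :=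
  QuotientAddGroup.induction_on u fun a =>
    isOfFinAddOrder_iff_exists_rat_eq_div.2 ⟨a / p, by simp⟩

end AddCircle

lemma qz_eq_zero_iff {x : ℚ} : qz x = 0 ↔ ∃ k : ℤ, (k : ℚ) = x := by
  simp [qz, QuotientAddGroup.eq_zero_iff, AddSubgroup.mem_zmultiples_iff]

lemma sum_zsmul_qz {ι : Type*} [Fintype ι] (a : ι → ℤ) (q : ι → ℚ) :
    ∑ j, a j • qz (q j) = qz ((fun j => (a j : ℚ)) ⬝ᵥ q) := by
  simp only [dotProduct, map_sum, ← zsmul_eq_mul, map_zsmul]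

section

variable {n : ℕ} {A : Matrix (Fin n) (Fin n) ℤ}

lemma qz_comp_mem_GA_iff (q : Fin n → ℚ) :
    (fun i => qz (q i)) ∈ GA A ↔ ∀ i, ∃ k : ℤ, (k : ℚ) = (A.map (Int.cast : ℤ → ℚ) *ᵥ q) i :=
  forall_congr' fun i => by rw [sum_zsmul_qz, qz_eq_zero_iff]; rfl

lemma qz_comp_mem_GA_iff_exists_int (hA : A.det ≠ 0) (q : Fin n → ℚ) :
    (fun i => qz (q i)) ∈ GA A ↔
      ∃ v : Fin n → ℤ, q = (A.map (Int.cast : ℤ → ℚ))⁻¹ *ᵥ fun j => (v j : ℚ) := by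
  have hdet : IsUnit (A.map (Int.cast : ℤ → ℚ)).det := by
    rw [← Int.cast_det]
    exact isUnit_iff_ne_zero.2 (Int.cast_ne_zero.2 hA)
  rw [qz_comp_mem_GA_iff]
  constructor
  · intro h
    choose v hv using h
    refine ⟨v, ?_⟩
    rw [show (fun j => (v j : ℚ)) = A.map (Int.cast : ℤ → ℚ) *ᵥ q from funext hv, mulVec_mulVec,
      nonsing_inv_mul _ hdet, one_mulVec]
  · rintro ⟨v, rfl⟩ i
    exact ⟨v i, by rw [mulVec_mulVec, mul_nonsing_inv _ hdet, one_mulVec]⟩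

lemma jA_transpose :
    jA Aᵀ = fun j => qz ((1 ᵥ* (A.map (Int.cast : ℤ → ℚ))⁻¹) j) := by
  funext j
  rw [jA, transpose_map, ← transpose_nonsing_inv, mulVec_transpose]

lemma sum_qz_inv_mulVec (v : Fin n → ℤ) :
    ∑ i, qz (((A.map (Int.cast : ℤ → ℚ))⁻¹ *ᵥ fun j => (v j : ℚ)) i) = ∑ j, v j • jA Aᵀ j := by
  rw [jA_transpose, sum_zsmul_qz, ← map_sum, ← one_dotProduct, dotProduct_mulVec, dotProduct_comm]

def sumGA (A : Matrix (Fin n) (Fin n) ℤ) : GA A →+ QZ :=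
  AddMonoidHom.mk' (fun g => ∑ i, (g : Fin n → QZ) i) fun _ _ => Finset.sum_add_distrib

lemma ker_sumGA : (sumGA A).ker = (SLA A).addSubgroupOf (GA A) := by
  ext ⟨g, hg⟩
  exact ⟨fun h => ⟨hg, h⟩, And.right⟩

lemma range_sumGA (hA : A.det ≠ 0) :
    (sumGA A).range = AddSubgroup.closure (Set.range (jA Aᵀ)) := by
  ext y
  rw [AddSubgroup.mem_closure_range_iff_of_fintype, AddMonoidHom.mem_range]
  constructor
  · rintro ⟨⟨g, hg⟩, rfl⟩
    choose q hq using fun i => QuotientAddGroup.mk'_surjective _ (g i)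
    obtain rfl : (fun i => qz (q i)) = g := funext hq
    obtain ⟨v, rfl⟩ := (qz_comp_mem_GA_iff_exists_int hA q).1 hg
    exact ⟨v, sum_qz_inv_mulVec v⟩
  · rintro ⟨v, rfl⟩
    exact ⟨⟨_, (qz_comp_mem_GA_iff_exists_int hA _).2 ⟨v, rfl⟩⟩, sum_qz_inv_mulVec v⟩

def quotientSLAEquivClosure (hA : A.det ≠ 0) :
    GA A ⧸ (SLA A).addSubgroupOf (GA A) ≃+ AddSubgroup.closure (Set.range (jA Aᵀ)) :=
  (QuotientAddGroup.quotientAddEquivOfEq ker_sumGA.symm).trans <|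
    (QuotientAddGroup.quotientKerEquivRange (sumGA A)).trans
      (AddEquiv.addSubgroupCongr (range_sumGA hA))

end

theorem index_SLA_eq_addOrderOf_jA_transpose_general {n : ℕ}
    (A : Matrix (Fin n) (Fin n) ℤ) (hA : A.det ≠ 0) :
    ((SLA A).addSubgroupOf (GA A)).index = addOrderOf (jA Aᵀ) ∧
    ((SLA A).addSubgroupOf (GA A)).index ≠ 0 ∧
    IsAddCyclic (GA A ⧸ (SLA A).addSubgroupOf (GA A)) ∧
    Nat.card (GA A ⧸ (SLA A).addSubgroupOf (GA A)) = addOrderOf (jA Aᵀ) := by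
  have := AddCircle.finite_closure_range
    (IsOfFinAddOrder.pi fun i => AddCircle.isOfFinAddOrder_of_rat (jA Aᵀ i))
  have := AddCircle.isAddCyclic_of_finite (AddSubgroup.closure (Set.range (jA Aᵀ)))
  let e := quotientSLAEquivClosure hA
  have hcard : Nat.card (GA A ⧸ (SLA A).addSubgroupOf (GA A)) = addOrderOf (jA Aᵀ) :=
    (Nat.card_congr e.toEquiv).trans AddSubgroup.card_closure_range_eq_addOrderOf
  have hpos : Nat.card (GA A ⧸ (SLA A).addSubgroupOf (GA A)) ≠ 0 :=
    (Nat.card_congr e.toEquiv).trans_ne Nat.card_pos.ne'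
  exact ⟨hcard, hpos, isAddCyclic_of_surjective e.symm.toAddMonoidHom e.symm.surjective, hcard⟩

/-- the index of `SL_A` in `G_A` is finite and equal to the additive order of
`j_{Aᵀ}`; the quotient `G_A/SL_A` is cyclic of that order. -/
theorem index_SLA_eq_addOrderOf_jA_transpose {n : ℕ} (hn : 1 ≤ n)
    (A : Matrix (Fin n) (Fin n) ℤ) (hA : A.det ≠ 0) :
    ((SLA A).addSubgroupOf (GA A)).index = addOrderOf (jA Aᵀ) ∧
    ((SLA A).addSubgroupOf (GA A)).index ≠ 0 ∧
    IsAddCyclic (GA A ⧸ (SLA A).addSubgroupOf (GA A)) ∧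
    Nat.card (GA A ⧸ (SLA A).addSubgroupOf (GA A)) = addOrderOf (jA Aᵀ) :=
  index_SLA_eq_addOrderOf_jA_transpose_general A hA

end
end

section
/- The lattices U(3) ⊕ E₆ and U ⊕ A₂ ⊕ A₂ ⊕ A₂ are isometric: there exists an 8×8 integer matrix P with det P = ±1 such that Pᵀ G₁ P = G₂, where G₁ is the block-diagonal Gram matrix with blocks [[0,3],[3,0]] and the negative of the E₆ Cartan matrix, and G₂ is the block-diagonal Gram matrix with blocks [[0,1],[1,0]] and three copies of [[-2,1],[1,-2]]. -/
set_option maxRecDepth 20000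
set_option maxHeartbeats 2000000


open scoped BigOperators
open Matrix

/-- The Gram matrix of `U(3) ⊕ E₆`: the block `[[0,3],[3,0]]` followed by the negative of
the `E₆` Cartan matrix (Bourbaki numbering: the chain `1–3–4–5–6` with node `2` attached
to node `4`). -/
def GramUE6 : Matrix (Fin 8) (Fin 8) ℤ :=
  !![0, 3, 0, 0, 0, 0, 0, 0;
     3, 0, 0, 0, 0, 0, 0, 0;
     0, 0, -2, 0, 1, 0, 0, 0;
     0, 0, 0, -2, 0, 1, 0, 0;
     0, 0, 1, 0, -2, 1, 0, 0;
     0, 0, 0, 1, 1, -2, 1, 0;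
     0, 0, 0, 0, 0, 1, -2, 1;
     0, 0, 0, 0, 0, 0, 1, -2]

/-- The Gram matrix of `U ⊕ A₂ ⊕ A₂ ⊕ A₂`: the block `[[0,1],[1,0]]` followed by three
copies of `[[-2,1],[1,-2]]`. -/
def GramUA2A2A2 : Matrix (Fin 8) (Fin 8) ℤ :=
  !![0, 1, 0, 0, 0, 0, 0, 0;
     1, 0, 0, 0, 0, 0, 0, 0;
     0, 0, -2, 1, 0, 0, 0, 0;
     0, 0, 1, -2, 0, 0, 0, 0;
     0, 0, 0, 0, -2, 1, 0, 0;
     0, 0, 0, 0, 1, -2, 0, 0;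
     0, 0, 0, 0, 0, 0, -2, 1;
     0, 0, 0, 0, 0, 0, 1, -2]

def Pmat : Matrix (Fin 8) (Fin 8) ℤ :=
  !![-1, -1, -1, 0, -1, 0, -1, 0;
     -1, -1, -1, 0, -1, 0, -1, 1;
     0, 0, -1, 1, 0, 1, 0, 0;
     -1, -1, -2, 1, -2, 1, 0, 0;
     0, -1, -2, 2, -1, 1, 0, 0;
     1, 0, -1, 2, -1, 2, 2, -1;
     0, -1, -1, 1, -2, 2, 0, 0;
     0, 0, 0, 1, -1, 1, 0, 0]

def Qmat : Matrix (Fin 8) (Fin 8) ℤ :=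
  !![-3, -3, -1, 2, 2, -3, 2, -1;
     -3, -3, 0, 3, 1, -3, 1, 0;
     2, 2, 0, -2, -1, 2, -1, 1;
     1, 1, 0, -1, 0, 1, -1, 1;
     2, 2, 1, -2, -1, 2, -1, 0;
     1, 1, 1, -1, -1, 1, 0, 0;
     1, 2, 0, -1, -1, 2, -1, 0;
     -1, 1, 0, 0, 0, 0, 0, 0]

lemma Pmat_mul_Qmat : Pmat * Qmat = 1 := by
  ext i j; fin_cases i <;> fin_cases j <;> decide

lemma Pmat_det : Pmat.det = 1 ∨ Pmat.det = -1 := by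
  have : Invertible Pmat := invertibleOfRightInverse Pmat Qmat Pmat_mul_Qmat
  exact Int.isUnit_iff.mp Pmat.isUnit_det_of_invertible

lemma Pmat_gram : Pmatᵀ * GramUE6 * Pmat = GramUA2A2A2 := by
  ext i j; fin_cases i <;> fin_cases j <;> decide

/-- the lattices `U(3) ⊕ E₆` and `U ⊕ A₂ ⊕ A₂ ⊕ A₂` are isometric: there is
`P ∈ GL(8, ℤ)` with `Pᵀ G₁ P = G₂`. -/
theorem U3E6_isometric_UA2A2A2 :
    ∃ P : Matrix (Fin 8) (Fin 8) ℤ,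
      (P.det = 1 ∨ P.det = -1) ∧ Pᵀ * GramUE6 * P = GramUA2A2A2 := by
  exact ⟨Pmat, Pmat_det, Pmat_gram⟩
end

section
/- Consider 3×3 integer matrices B of one of the following five shapes, with integers a, b, c ≥ 2: fermat diag(a,b,c); chain [[a,1,0],[0,b,1],[0,0,c]]; loop [[a,1,0],[0,b,1],[1,0,c]]; chain+fermat [[a,1,0],[0,b,0],[0,0,c]]; loop+fermat [[a,1,0],[1,b,0],[0,0,c]]. Among all such matrices B and all permutations w of the weight vector (4,3,3) satisfying the quasihomogeneity condition B·w = (15,15,15)ᵀ, the only solutions are (up to the permutation of variables) the chain matrix [[3,1,0],[0,4,1],[0,0,5]] with weights (4,3,3) and the chain+fermat matrix [[3,1,0],[0,5,0],[0,0,5]] with weights (4,3,3). (These correspond to the only two invertible polynomials of the form x³ + f(y,z,w) with weight system (5,4,3,3;15), namely W₁ = x³ + y³z + z⁴w + w⁵ and W₂ = x³ + y³z + z⁵ + w⁵.) -/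
open Matrix

/-!
Since `4 ∤ 15` and `4 ∤ 11`, a row `e·wᵢ = 15` forces `wᵢ = 3`, and so does a row
`e·wⱼ + wᵢ = 15`. In the fermat, loop and loop+fermat shapes every variable occurs in such a
role, so all three weights would be `3`. In the chain and chain+fermat shapes this leaves only
`w = (4, 3, 3)`, and the exponents are then read off row by row.
-/

def fermat (a b c : ℤ) : Matrix (Fin 3) (Fin 3) ℤ := !![a, 0, 0; 0, b, 0; 0, 0, c]

def chain (a b c : ℤ) : Matrix (Fin 3) (Fin 3) ℤ := !![a, 1, 0; 0, b, 1; 0, 0, c]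

def loop (a b c : ℤ) : Matrix (Fin 3) (Fin 3) ℤ := !![a, 1, 0; 0, b, 1; 1, 0, c]

def chainFermat (a b c : ℤ) : Matrix (Fin 3) (Fin 3) ℤ := !![a, 1, 0; 0, b, 0; 0, 0, c]

def loopFermat (a b c : ℤ) : Matrix (Fin 3) (Fin 3) ℤ := !![a, 1, 0; 1, b, 0; 0, 0, c]

theorem eq_of_exists_perm_433 {w : Fin 3 → ℤ}
    (hw : ∃ σ : Equiv.Perm (Fin 3), ∀ i, w i = ![4, 3, 3] (σ i)) :
    w = ![4, 3, 3] ∨ w = ![3, 4, 3] ∨ w = ![3, 3, 4] := by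
  obtain ⟨σ, hσ⟩ := hw
  obtain rfl : w = ![4, 3, 3] ∘ σ := funext hσ
  revert σ
  decide

section Shapes

variable {a b c : ℤ} {w : Fin 3 → ℤ}

theorem fermat_mulVec_ne (hw : w = ![4, 3, 3] ∨ w = ![3, 4, 3] ∨ w = ![3, 3, 4]) :
    fermat a b c *ᵥ w ≠ ![15, 15, 15] := by
  rcases hw with rfl | rfl | rfl <;> simp [fermat, ← List.ofFn_inj] <;> omega

theorem loop_mulVec_ne (hw : w = ![4, 3, 3] ∨ w = ![3, 4, 3] ∨ w = ![3, 3, 4]) :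
    loop a b c *ᵥ w ≠ ![15, 15, 15] := by
  rcases hw with rfl | rfl | rfl <;> simp [loop, ← List.ofFn_inj] <;> omega

theorem loopFermat_mulVec_ne (hw : w = ![4, 3, 3] ∨ w = ![3, 4, 3] ∨ w = ![3, 3, 4]) :
    loopFermat a b c *ᵥ w ≠ ![15, 15, 15] := by
  rcases hw with rfl | rfl | rfl <;> simp [loopFermat, ← List.ofFn_inj] <;> omega

theorem eq_of_chain_mulVec_eq (hw : w = ![4, 3, 3] ∨ w = ![3, 4, 3] ∨ w = ![3, 3, 4])
    (h : chain a b c *ᵥ w = ![15, 15, 15]) :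
    chain a b c = chain 3 4 5 ∧ w = ![4, 3, 3] := by
  rcases hw with rfl | rfl | rfl <;> simp [chain, ← List.ofFn_inj] at h ⊢ <;> omega

theorem eq_of_chainFermat_mulVec_eq (hw : w = ![4, 3, 3] ∨ w = ![3, 4, 3] ∨ w = ![3, 3, 4])
    (h : chainFermat a b c *ᵥ w = ![15, 15, 15]) :
    chainFermat a b c = chainFermat 3 5 5 ∧ w = ![4, 3, 3] := by
  rcases hw with rfl | rfl | rfl <;> simp [chainFermat, ← List.ofFn_inj] at h ⊢ <;> omega

end Shapes

theorem weight_system_classification_general (B : Matrix (Fin 3) (Fin 3) ℤ) (a b c : ℤ)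
    (hB : B = !![a, 0, 0; 0, b, 0; 0, 0, c] ∨
          B = !![a, 1, 0; 0, b, 1; 0, 0, c] ∨
          B = !![a, 1, 0; 0, b, 1; 1, 0, c] ∨
          B = !![a, 1, 0; 0, b, 0; 0, 0, c] ∨
          B = !![a, 1, 0; 1, b, 0; 0, 0, c])
    (w : Fin 3 → ℤ) (hw : ∃ σ : Equiv.Perm (Fin 3), ∀ i, w i = ![4, 3, 3] (σ i))
    (hq : B.mulVec w = ![15, 15, 15]) :
    (B = !![3, 1, 0; 0, 4, 1; 0, 0, 5] ∧ w = ![4, 3, 3]) ∨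
    (B = !![3, 1, 0; 0, 5, 0; 0, 0, 5] ∧ w = ![4, 3, 3]) := by
  have hw := eq_of_exists_perm_433 hw
  rcases hB with rfl | rfl | rfl | rfl | rfl
  · exact absurd hq (fermat_mulVec_ne hw)
  · exact .inl (eq_of_chain_mulVec_eq hw hq)
  · exact absurd hq (loop_mulVec_ne hw)
  · exact .inr (eq_of_chainFermat_mulVec_eq hw hq)
  · exact absurd hq (loopFermat_mulVec_ne hw)

/-- among the five shapes of exponent matrices of invertible polynomials in
three variables (fermat, chain, loop, chain+fermat, loop+fermat, with all exponents
`a, b, c ≥ 2`) and all permutations `w` of the weight vector `(4,3,3)`, the only solutions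
of the quasihomogeneity condition `B·w = (15,15,15)ᵀ` are the chain matrix
`[[3,1,0],[0,4,1],[0,0,5]]` with weights `(4,3,3)` (i.e. `W₁ = x³+y³z+z⁴w+w⁵` as a
polynomial `x³+f(y,z,w)` of weight system `(5,4,3,3;15)`) and the chain+fermat matrix
`[[3,1,0],[0,5,0],[0,0,5]]` with weights `(4,3,3)` (i.e. `W₂ = x³+y³z+z⁵+w⁵`). -/
theorem weight_system_classification (B : Matrix (Fin 3) (Fin 3) ℤ) (a b c : ℤ)
    (ha : 2 ≤ a) (hb : 2 ≤ b) (hc : 2 ≤ c)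
    (hB : B = !![a, 0, 0; 0, b, 0; 0, 0, c] ∨
          B = !![a, 1, 0; 0, b, 1; 0, 0, c] ∨
          B = !![a, 1, 0; 0, b, 1; 1, 0, c] ∨
          B = !![a, 1, 0; 0, b, 0; 0, 0, c] ∨
          B = !![a, 1, 0; 1, b, 0; 0, 0, c])
    (w : Fin 3 → ℤ) (hw : ∃ σ : Equiv.Perm (Fin 3), ∀ i, w i = ![4, 3, 3] (σ i))
    (hq : B.mulVec w = ![15, 15, 15]) :
    (B = !![3, 1, 0; 0, 4, 1; 0, 0, 5] ∧ w = ![4, 3, 3]) ∨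
    (B = !![3, 1, 0; 0, 5, 0; 0, 0, 5] ∧ w = ![4, 3, 3]) :=
  weight_system_classification_general B a b c hB w hw hq
end

section
/- Let W ∈ ℂ[x₁,…,xₙ] be a direct sum of atomic types: W = W₁ + ⋯ + W_k, where the W_m are polynomials in pairwise disjoint sets of variables covering all of x₁,…,xₙ, and each W_m is of one of the forms (with all exponents integers ≥ 2, in the variables of its block): fermat x^a; loop x₁^{a₁}x₂ + x₂^{a₂}x₃ + ⋯ + x_r^{a_r}x₁; or chain x₁^{a₁}x₂ + x₂^{a₂}x₃ + ⋯ + x_{r-1}^{a_{r-1}}x_r + x_r^{a_r}. Then the origin is the only point of ℂⁿ at which all n partial derivatives ∂W/∂x₁, …, ∂W/∂xₙ vanish simultaneously. -/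
open scoped BigOperators
open MvPolynomial

/-- An atomic block of an invertible polynomial: a loop
`x₁^{a₁}x₂ + x₂^{a₂}x₃ + ⋯ + x_r^{a_r}x₁` (with `r ≥ 2`) or a chain
`x₁^{a₁}x₂ + x₂^{a₂}x₃ + ⋯ + x_{r-1}^{a_{r-1}}x_r + x_r^{a_r}` (with `r ≥ 1`; for `r = 1`
this is a fermat monomial `x^a`), on the variables `v 0, …, v (r-1)` with exponents
`a 0, …, a (r-1)`, all at least `2`. -/
structure AtomicBlock (n : ℕ) where
  r : ℕ
  isLoop : Bool
  hr : 1 ≤ r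
  hloop : isLoop = true → 2 ≤ r
  v : Fin r → Fin n
  a : Fin r → ℕ
  ha : ∀ k, 2 ≤ a k

/-- The polynomial of an atomic block. -/
noncomputable def blockPoly {n : ℕ} (B : AtomicBlock n) : MvPolynomial (Fin n) ℂ :=
  if B.isLoop then
    ∑ k : Fin B.r, X (B.v k) ^ B.a k * X (B.v ⟨((k : ℕ) + 1) % B.r, Nat.mod_lt _ B.hr⟩)
  else
    ∑ k : Fin B.r, X (B.v k) ^ B.a k *
      (if h : (k : ℕ) + 1 < B.r then X (B.v ⟨(k : ℕ) + 1, h⟩) else 1)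

/-! Since the blocks involve disjoint sets of variables, `z` is a critical point of `W` exactly
when its restriction to every block is a critical point of that block, so one block suffices.
Write its variables as `y k` and put `m k = y k ^ a k * y (k + 1)`, where for the last index
`y (k + 1)` is the first variable of a loop and `1` for a chain. Multiplying `∂W/∂y (k + 1)` by
`y (k + 1)` gives `m k + a (k + 1) * m (k + 1) = 0`. For a chain, the same computation at the
first variable gives `a 0 * m 0 = 0`, so every `m k` vanishes by induction. For a loop, and more
generally whenever `k ↦ k + 1` is a permutation, following the orbit of `k` back to `k` gives
`m k = (∏ -a j) * m k` with `∏ a j ≥ 2`, so again `m k = 0`. Finally `m k = 0` says that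
`y k = 0` or `y (k + 1) = 0`, and in the second case `∂W/∂y (k + 1) = 0` reduces to
`y k ^ a k = 0`. -/

section Critical
variable {σ R : Type*} [CommSemiring R]

def IsCriticalPoint (p : MvPolynomial σ R) (x : σ → R) : Prop :=
  ∀ i, eval x (pderiv i p) = 0

theorem pderiv_rename_of_notMem_range {τ : Type*} {f : σ → τ} {i : τ} (hi : i ∉ Set.range f)
    (p : MvPolynomial σ R) : pderiv i (rename f p) = 0 := by
  classical
  refine pderiv_eq_zero_of_notMem_vars fun h => hi ?_
  obtain ⟨j, -, rfl⟩ := Finset.mem_image.1 (vars_rename f p h)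
  exact ⟨j, rfl⟩

theorem isCriticalPoint_sum_rename_iff {τ : Type*} [Fintype τ] {ι : τ → Type*}
    {v : ∀ t, ι t → σ} (hv : Function.Bijective fun q : (Σ t, ι t) => v q.1 q.2)
    (p : ∀ t, MvPolynomial (ι t) R) (x : σ → R) :
    IsCriticalPoint (∑ t, rename (v t) (p t)) x ↔ ∀ t, IsCriticalPoint (p t) (x ∘ v t) := by
  have key : ∀ t k, eval x (pderiv (v t k) (∑ s, rename (v s) (p s))) =
      eval (x ∘ v t) (pderiv k (p t)) := by
    intro t k
    have hvt : Function.Injective (v t) := fun k l h => by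
      simpa using hv.1 (a₁ := ⟨t, k⟩) (a₂ := ⟨t, l⟩) h
    rw [map_sum, map_sum, Finset.sum_eq_single t, pderiv_rename hvt, eval_rename]
    · intro s _ hst
      rw [pderiv_rename_of_notMem_range, map_zero]
      rintro ⟨l, hl⟩
      exact hst (congrArg Sigma.fst (hv.1 (a₁ := ⟨s, l⟩) (a₂ := ⟨t, k⟩) hl))
    · simp
  refine ⟨fun h t k => key t k ▸ h _, fun h i => ?_⟩
  obtain ⟨⟨t, k⟩, rfl⟩ := hv.2 i
  exact (key t k).trans (h t k)

end Critical

theorem prod_neg_natCast_ne_one {K α : Type*} [CommRing K] [CharZero K] {s : Finset α}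
    (hs : s.Nonempty) {f : α → ℕ} (hf : ∀ i ∈ s, 2 ≤ f i) :
    ∏ i ∈ s, -(f i : K) ≠ 1 := by
  intro h
  have hsq : (((∏ i ∈ s, f i) ^ 2 : ℕ) : K) = 1 :=
    calc _ = (∏ i ∈ s, -(f i : K)) ^ 2 := by push_cast; simp [← Finset.prod_pow]
      _ = 1 := by rw [h, one_pow]
  obtain ⟨i, hi⟩ := hs
  have hdvd : f i ∣ 1 := by
    rw [← (Nat.pow_eq_one.1 (Nat.cast_eq_one.1 hsq)).resolve_right two_ne_zero]
    exact Finset.dvd_prod_of_mem f hi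
  have := hf i hi
  rw [Nat.dvd_one] at hdvd
  omega

section Loop
variable {ι R K : Type*} [Fintype ι] [CommSemiring R] [CommRing K] [IsDomain K] [CharZero K]

noncomputable def loopPoly (σ : Equiv.Perm ι) (a : ι → ℕ) : MvPolynomial ι R :=
  ∑ i, X i ^ a i * X (σ i)

theorem pderiv_loopPoly (σ : Equiv.Perm ι) (a : ι → ℕ) (k : ι) :
    pderiv k (loopPoly σ a : MvPolynomial ι R) =
      (a k : MvPolynomial ι R) * X k ^ (a k - 1) * X (σ k) + X (σ.symm k) ^ a (σ.symm k) := by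
  classical
  simp only [loopPoly, map_sum, pderiv_mul, pderiv_pow, pderiv_X, Finset.sum_add_distrib]
  congr 1
  · simp [Pi.single_apply]
  · simp [Pi.single_apply, ← Equiv.eq_symm_apply]

theorem eq_zero_of_forall_eq_neg_mul_perm {σ : Equiv.Perm ι} {a : ι → ℕ}
    (ha : ∀ i, 2 ≤ a i) {m : ι → K} (hm : ∀ j, m j = -(a (σ j) : K) * m (σ j)) :
    m = 0 := by
  have horbit : ∀ j N,
      m j = (∏ n ∈ Finset.range N, -(a ((σ ^ (n + 1)) j) : K)) * m ((σ ^ N) j) := by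
    intro j N
    induction N with
    | zero => simp
    | succ N ih =>
      rw [ih, Finset.prod_range_succ, hm ((σ ^ N) j), ← Equiv.Perm.mul_apply, ← pow_succ']
      ring
  funext j
  have h := horbit j (orderOf σ)
  rw [pow_orderOf_eq_one, Equiv.Perm.one_apply] at h
  have hne := prod_neg_natCast_ne_one (K := K)
    (Finset.nonempty_range_iff.2 (orderOf_pos σ).ne') (fun n _ => ha ((σ ^ (n + 1)) j))
  have hfactor :
      (1 - ∏ n ∈ Finset.range (orderOf σ), -(a ((σ ^ (n + 1)) j) : K)) * m j = 0 := by
    linear_combination h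
  exact (mul_eq_zero.1 hfactor).resolve_left (sub_ne_zero.2 hne.symm)

theorem isCriticalPoint_loopPoly_iff {σ : Equiv.Perm ι} {a : ι → ℕ} (ha : ∀ i, 2 ≤ a i)
    {y : ι → K} : IsCriticalPoint (loopPoly σ a) y ↔ y = 0 := by
  have heval : ∀ k, eval y (pderiv k (loopPoly σ a)) =
      a k * y k ^ (a k - 1) * y (σ k) + y (σ.symm k) ^ a (σ.symm k) := by
    simp [pderiv_loopPoly]
  refine ⟨fun hy => ?_, ?_⟩
  · have hy' : ∀ j, a (σ j) * y (σ j) ^ (a (σ j) - 1) * y (σ (σ j)) + y j ^ a j = 0 := by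
      intro j
      simpa [heval] using hy (σ j)
    have hm : (fun j => y j ^ a j * y (σ j)) = 0 := by
      refine eq_zero_of_forall_eq_neg_mul_perm (σ := σ) ha fun j => ?_
      have hpow : y (σ j) ^ (a (σ j) - 1) * y (σ j) = y (σ j) ^ a (σ j) :=
        pow_sub_one_mul (by have := ha (σ j); omega) _
      linear_combination y (σ j) * hy' j - (a (σ j) : K) * y (σ (σ j)) * hpow
    funext j
    rcases mul_eq_zero.1 (congrFun hm j) with h | h
    · exact (pow_eq_zero_iff (by have := ha j; omega)).1 h
    · have h' := hy' j
      rw [h, zero_pow (by have := ha (σ j); omega)] at h'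
      simpa [pow_eq_zero_iff (show a j ≠ 0 by have := ha j; omega)] using h'
  · rintro rfl k
    rw [heval]
    simp [zero_pow (show a k - 1 ≠ 0 by have := ha k; omega),
      zero_pow (show a (σ.symm k) ≠ 0 by have := ha (σ.symm k); omega)]

end Loop

section Chain
variable {R K : Type*} [CommSemiring R] [CommRing K] [IsDomain K] [CharZero K] {r : ℕ}

noncomputable def chainPoly (a : Fin r → ℕ) : MvPolynomial (Fin r) R :=
  ∑ k : Fin r, X k ^ a k * if h : (k : ℕ) + 1 < r then X ⟨k + 1, h⟩ else 1

theorem pderiv_chainPoly (a : Fin r → ℕ) (k : Fin r) :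
    pderiv k (chainPoly a : MvPolynomial (Fin r) R) =
      (a k : MvPolynomial (Fin r) R) * X k ^ (a k - 1) *
          (if h : (k : ℕ) + 1 < r then X ⟨k + 1, h⟩ else 1) +
        if h : 0 < (k : ℕ) then X ⟨k - 1, by omega⟩ ^ a ⟨k - 1, by omega⟩ else 0 := by
  simp only [chainPoly, map_sum, pderiv_mul, pderiv_pow, pderiv_X, Finset.sum_add_distrib]
  congr 1
  · rw [Finset.sum_eq_single k (fun j _ hj => by simp [hj]) (by simp)]
    simp
  · split_ifs with hk
    · rw [Finset.sum_eq_single ⟨k - 1, by omega⟩]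
      · simp [show (k : ℕ) - 1 + 1 = k by omega]
      · intro j _ hj
        split_ifs with h
        · rw [pderiv_X_of_ne (fun h => hj (Fin.ext (by simp [Fin.ext_iff] at h ⊢; omega))),
            mul_zero]
        · simp
      · simp
    · refine Finset.sum_eq_zero fun j _ => ?_
      split_ifs with h
      · rw [pderiv_X_of_ne (fun h => hk (by simp [Fin.ext_iff] at h; omega)), mul_zero]
      · simp

theorem eq_zero_of_forall_add_mul_succ_eq_zero {a : Fin r → ℕ} (ha : ∀ k, a k ≠ 0)
    {m : Fin r → K}
    (h0 : ∀ h : 0 < r, (a ⟨0, h⟩ : K) * m ⟨0, h⟩ = 0)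
    (hsucc : ∀ n (h : n + 1 < r), m ⟨n, by omega⟩ + a ⟨n + 1, h⟩ * m ⟨n + 1, h⟩ = 0) :
    m = 0 := by
  suffices ∀ n (h : n < r), m ⟨n, h⟩ = 0 from funext fun k => this k k.isLt
  intro n
  induction n with
  | zero => exact fun h => (mul_eq_zero.1 (h0 h)).resolve_left (Nat.cast_ne_zero.2 (ha _))
  | succ n ih =>
    intro h
    have := hsucc n h
    rw [ih (by omega), zero_add] at this
    exact (mul_eq_zero.1 this).resolve_left (Nat.cast_ne_zero.2 (ha _))

theorem isCriticalPoint_chainPoly_iff {a : Fin r → ℕ} (ha : ∀ k, 2 ≤ a k)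
    {y : Fin r → K} : IsCriticalPoint (chainPoly a) y ↔ y = 0 := by
  set next : Fin r → K := fun k => if h : (k : ℕ) + 1 < r then y ⟨k + 1, h⟩ else 1
    with hnext
  have heval : ∀ k : Fin r, eval y (pderiv k (chainPoly a)) = a k * y k ^ (a k - 1) * next k +
      if h : 0 < (k : ℕ) then y ⟨k - 1, by omega⟩ ^ a ⟨k - 1, by omega⟩ else 0 := by
    intro k
    rw [pderiv_chainPoly]
    simp [hnext, apply_dite (eval y)]
  refine ⟨fun hy => ?_, ?_⟩
  · have hy0 (h : 0 < r) :
        a ⟨0, h⟩ * y ⟨0, h⟩ ^ (a ⟨0, h⟩ - 1) * next ⟨0, h⟩ = 0 := by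
      simpa [heval] using hy ⟨0, h⟩
    have hysucc (n : ℕ) (h : n + 1 < r) :
        a ⟨n + 1, h⟩ * y ⟨n + 1, h⟩ ^ (a ⟨n + 1, h⟩ - 1) * next ⟨n + 1, h⟩ +
          y ⟨n, by omega⟩ ^ a ⟨n, by omega⟩ = 0 := by
      simpa [heval] using hy ⟨n + 1, h⟩
    have hpow (k : Fin r) : y k ^ (a k - 1) * y k = y k ^ a k :=
      pow_sub_one_mul (by have := ha k; omega) _
    have hm : (fun k => y k ^ a k * next k) = 0 := by
      refine eq_zero_of_forall_add_mul_succ_eq_zero (a := a) (fun k => by have := ha k; omega)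
        (fun h => ?_) (fun n h => ?_)
      · set k : Fin r := ⟨0, h⟩
        linear_combination y k * hy0 h - (a k : K) * next k * hpow k
      · set k : Fin r := ⟨n + 1, h⟩
        have hn : next ⟨n, by omega⟩ = y k := by simp [hnext, k, h]
        linear_combination y k * hysucc n h - (a k : K) * next k * hpow k +
          y ⟨n, by omega⟩ ^ a ⟨n, by omega⟩ * hn
    funext k
    rcases mul_eq_zero.1 (congrFun hm k) with h | h
    · exact (pow_eq_zero_iff (show a k ≠ 0 by have := ha k; omega)).1 h
    · simp only [hnext] at h
      split_ifs at h with hk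
      · have h' := hysucc k hk
        rw [h, zero_pow (by have := ha ⟨k + 1, hk⟩; omega)] at h'
        simpa [pow_eq_zero_iff (show a k ≠ 0 by have := ha k; omega)] using h'
      · exact absurd h one_ne_zero
  · rintro rfl k
    have hk := ha k
    rw [heval]
    split_ifs with h
    · have hk' := ha ⟨k - 1, by omega⟩
      simp [zero_pow (show a k - 1 ≠ 0 by omega),
        zero_pow (show a ⟨k - 1, by omega⟩ ≠ 0 by omega)]
    · simp [zero_pow (show a k - 1 ≠ 0 by omega)]

end Chain

namespace AtomicBlock
variable {n : ℕ} (B : AtomicBlock n)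

noncomputable def localPoly : MvPolynomial (Fin B.r) ℂ :=
  if B.isLoop then loopPoly (finRotate B.r) B.a else chainPoly B.a

theorem blockPoly_eq_rename_localPoly : blockPoly B = rename B.v B.localPoly := by
  have hrot : ∀ k : Fin B.r, finRotate B.r k = ⟨((k : ℕ) + 1) % B.r, Nat.mod_lt _ B.hr⟩ :=
    fun k => Fin.ext (by simp [Fin.val_add])
  unfold blockPoly localPoly
  split_ifs
  · simp [loopPoly, hrot]
  · simp [chainPoly, apply_dite (rename B.v)]

theorem isCriticalPoint_localPoly_iff {y : Fin B.r → ℂ} :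
    IsCriticalPoint B.localPoly y ↔ y = 0 := by
  unfold localPoly
  split_ifs
  · exact isCriticalPoint_loopPoly_iff B.ha
  · exact isCriticalPoint_chainPoly_iff B.ha

end AtomicBlock

/-- if `W = W₁ + ⋯ + W_m` is a direct sum of atomic types (fermat, loop,
chain, all exponents at least 2) in pairwise disjoint sets of variables covering all of
`x₁, …, xₙ`, then the origin is the only point of `ℂⁿ` at which all `n` partial
derivatives of `W` vanish simultaneously. -/
theorem atomic_sum_nondegenerate (n m : ℕ) (Bl : Fin m → AtomicBlock n)
    (hbij : Function.Bijective
      (fun p : (Σ t : Fin m, Fin (Bl t).r) => (Bl p.1).v p.2))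
    (W : MvPolynomial (Fin n) ℂ) (hW : W = ∑ t, blockPoly (Bl t)) :
    (∀ i : Fin n, MvPolynomial.eval (0 : Fin n → ℂ) (MvPolynomial.pderiv i W) = 0) ∧
    (∀ z : Fin n → ℂ,
      (∀ i : Fin n, MvPolynomial.eval z (MvPolynomial.pderiv i W) = 0) → z = 0) := by
  have hcrit : ∀ z, IsCriticalPoint W z ↔ ∀ t, z ∘ (Bl t).v = 0 := by
    intro z
    simp only [hW, AtomicBlock.blockPoly_eq_rename_localPoly,
      isCriticalPoint_sum_rename_iff (v := fun t => (Bl t).v) hbij,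
      AtomicBlock.isCriticalPoint_localPoly_iff]
  refine ⟨(hcrit 0).2 fun t => rfl, fun z hz => funext fun i => ?_⟩
  obtain ⟨⟨t, k⟩, rfl⟩ := hbij.2 i
  exact congrFun ((hcrit z).1 hz t) k
end
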